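/- Let m and d be positive integers and let a and b be nonnegative integers with max(a, b) ≤ C(m - 1 + d, d). If c is a positive integer such that a + b ≤ C(m - 1 + d, d) + c, then a^{⟨d⟩} + b^{⟨d⟩} ≤ (C(m - 1 + d, d))^{⟨d⟩} + c^{⟨d⟩}. -/

import Mathlib

/-!
Write `f_d` for `·^{⟨d⟩}`. Splitting off the top binomial gives
`f_{d+1}(C(k, d+1) + y) = C(k+1, d+2) + f_d(y)` for `y < C(k, d)`, and `f_d(C(k, d)) = C(k+1, d+1)`.
For `a + b ≤ C(n, d)` the theorem follows from superadditivity `f_d(x) + f_d(y) ≤ f_d(x + y)`;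
for `a + b ≥ C(n, d)` one proves it for `c = a + b - C(n, d)` by induction on `n`, cutting `a`
and `b` at `C(n-1, d)` along Pascal's rule `C(n, d) = C(n-1, d) + C(n-1, d-1)`. This needs,
besides the theorem in degree `d - 1`, a comparison of drops: removing `u` from `C(m, d)`
lowers `f_d` by at most as much as removing it from `C(p, e)` lowers `f_e`, whenever `e ≤ d` and
`m - d ≤ p - e`. The three statements are proved together by induction on `d`, with `d = 1`
(where `f_1(a) = C(a+1, 2)`) as the base.
-/

/-- Macaulay's function `a^{⟨d⟩}`: writing `a` in its Macaulay `d`-binomial representation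
`a = C(k_d, d) + C(k_{d-1}, d-1) + ⋯ + C(k_j, j)` (computed greedily: `k_d` is the largest
integer with `C(k_d, d) ≤ a`), we set `a^{⟨d⟩} = C(k_d+1, d+1) + ⋯ + C(k_j+1, j+1)`,
and `0^{⟨d⟩} = 0`. -/
def macaulay : ℕ → ℕ → ℕ
  | _, 0 => 0
  | 0, _ => 0
  | d + 1, a + 1 =>
    let k := Nat.findGreatest (fun k => Nat.choose k (d + 1) ≤ a + 1) (a + d + 2)
    Nat.choose (k + 1) (d + 2) + macaulay d (a + 1 - Nat.choose k (d + 1))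

open Nat

theorem choose_le_choose_add_add (n k i : ℕ) : n.choose k ≤ (n + i).choose (k + i) := by
  induction i with
  | zero => rfl
  | succ i ih => exact ih.trans (by rw [← add_assoc, ← add_assoc, choose_succ_succ']; omega)

theorem choose_le_choose_of_add_le {n k p e : ℕ} (hek : e ≤ k) (h : p + k ≤ n + e) :
    p.choose e ≤ n.choose k := by
  have := choose_le_choose_add_add p e (k - e)
  rw [Nat.add_sub_cancel' hek] at this
  exact this.trans (choose_le_choose k (by omega))

theorem lt_add_of_choose_lt {n k p e : ℕ} (hek : e ≤ k) (h : n.choose k < p.choose e) :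
    n + e < p + k := by
  by_contra h'
  exact (choose_le_choose_of_add_le hek (by omega)).not_gt h

theorem lt_choose_add_succ (a d : ℕ) : a < (a + d + 1).choose (d + 1) := by
  have := choose_le_choose_of_add_le (p := a + 1) (e := 1) (n := a + d + 1) (k := d + 1)
    (by omega) (by omega)
  rw [choose_one_right] at this
  omega

theorem exists_choose_le_lt_choose (d a : ℕ) :
    ∃ k, k.choose (d + 1) ≤ a ∧ a < (k + 1).choose (d + 1) := by
  have hex : ∃ k, a < (k + 1).choose (d + 1) := ⟨a + d, lt_choose_add_succ a d⟩
  refine ⟨Nat.find hex, ?_, Nat.find_spec hex⟩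
  cases h : Nat.find hex with
  | zero => simp
  | succ k => simpa using Nat.find_min hex (h ▸ k.lt_succ_self)

theorem macaulay_zero_left (a : ℕ) : macaulay 0 a = 0 := by cases a <;> rfl

theorem macaulay_zero_right (d : ℕ) : macaulay d 0 = 0 := by cases d <;> rfl

theorem macaulay_succ_of_choose_le_of_lt {d k a : ℕ} (h₁ : k.choose (d + 1) ≤ a)
    (h₂ : a < (k + 1).choose (d + 1)) :
    macaulay (d + 1) a = (k + 1).choose (d + 2) + macaulay d (a - k.choose (d + 1)) := by
  have hdk : d ≤ k := by
    by_contra! h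
    rw [choose_eq_zero_of_lt (by omega)] at h₂
    omega
  cases a with
  | zero =>
    obtain rfl : k = d := by
      by_contra h
      have := choose_pos (show d + 1 ≤ k by omega)
      omega
    simp [macaulay_zero_right, choose_succ_self]
  | succ a =>
    have hk : Nat.findGreatest (fun j => j.choose (d + 1) ≤ a + 1) (a + d + 2) = k := by
      rw [Nat.findGreatest_eq_iff]
      refine ⟨?_, fun _ => h₁, fun j hkj _ hj => ?_⟩
      · by_contra! h
        have := choose_le_choose (d + 1) (show a + 1 + d + 1 ≤ k by omega)
        have := lt_choose_add_succ (a + 1) d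
        omega
      · have := choose_le_choose (d + 1) (show k + 1 ≤ j by omega)
        omega
    rw [macaulay, hk]

theorem macaulay_succ_choose_add {d k y : ℕ} (hy : y < k.choose d) :
    macaulay (d + 1) (k.choose (d + 1) + y) = (k + 1).choose (d + 2) + macaulay d y := by
  rw [macaulay_succ_of_choose_le_of_lt (k := k) (by omega) (by rw [choose_succ_succ']; omega),
    Nat.add_sub_cancel_left]

theorem macaulay_succ_choose (d k : ℕ) :
    macaulay (d + 1) (k.choose (d + 1)) = (k + 1).choose (d + 2) := by
  rcases le_or_gt d k with h | h
  · simpa [macaulay_zero_right] using macaulay_succ_choose_add (y := 0) (choose_pos h)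
  · rw [choose_eq_zero_of_lt (by omega : k < d + 1),
      choose_eq_zero_of_lt (by omega : k + 1 < d + 2), macaulay_zero_right]

theorem macaulay_choose {d : ℕ} (hd : d ≠ 0) (k : ℕ) :
    macaulay d (k.choose d) = (k + 1).choose (d + 1) := by
  obtain ⟨d, rfl⟩ := exists_eq_succ_of_ne_zero hd
  exact macaulay_succ_choose d k

theorem macaulay_succ_choose_add_of_le {d k y : ℕ} (hd : d ≠ 0) (hy : y ≤ k.choose d) :
    macaulay (d + 1) (k.choose (d + 1) + y) =
      macaulay (d + 1) (k.choose (d + 1)) + macaulay d y := by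
  rw [macaulay_succ_choose]
  rcases hy.lt_or_eq with hy | rfl
  · exact macaulay_succ_choose_add hy
  · rw [add_comm (k.choose _), ← choose_succ_succ', macaulay_succ_choose, macaulay_choose hd]
    exact (choose_succ_succ' _ _).trans (add_comm _ _)

theorem macaulay_one_left (a : ℕ) : macaulay 1 a = (a + 1).choose 2 := by
  simpa [macaulay_zero_left] using
    macaulay_succ_of_choose_le_of_lt (d := 0) (k := a) (a := a) (by simp) (by simp)

theorem choose_two_add_le {c a : ℕ} (h : c ≤ a) (s : ℕ) :
    (c + s).choose 2 + a.choose 2 ≤ c.choose 2 + (a + s).choose 2 := by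
  have : ((c + s).choose 2 + a.choose 2 : ℚ) ≤ c.choose 2 + (a + s).choose 2 := by
    push_cast [cast_choose_two]
    have : (c : ℚ) ≤ a := by exact_mod_cast h
    nlinarith [(s.cast_nonneg : (0 : ℚ) ≤ s)]
  exact_mod_cast this

namespace Macaulay

def SumLe (d n : ℕ) : Prop :=
  ∀ a b c, a ≤ n.choose d → b ≤ n.choose d → a + b = n.choose d + c →
    macaulay d a + macaulay d b ≤ macaulay d (n.choose d) + macaulay d c

-- `f_d(C(m, d)) - f_d(C(m, d) - u) ≤ f_e(C(p, e)) - f_e(C(p, e) - u)`, with the subtractions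
-- moved across.
def DropLe (d m : ℕ) : Prop :=
  ∀ e p u, e ≠ 0 → e ≤ d → m + e ≤ p + d → u ≤ m.choose d → u ≤ p.choose e →
    macaulay d (m.choose d) + macaulay e (p.choose e - u) ≤
      macaulay e (p.choose e) + macaulay d (m.choose d - u)

theorem sumLe_one (n : ℕ) : SumLe 1 n := by
  intro a b c ha hb hab
  simp only [choose_one_right, macaulay_one_left] at *
  have := choose_two_add_le (show c + 1 ≤ a + 1 by omega) (n - a)
  rw [show c + 1 + (n - a) = b + 1 by omega, show a + 1 + (n - a) = n + 1 by omega] at this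
  omega

theorem dropLe_one (m : ℕ) : DropLe 1 m := by
  intro e p u he hed hmp hum hup
  obtain rfl : e = 1 := by omega
  simp only [choose_one_right, macaulay_one_left] at *
  have := choose_two_add_le (show m - u + 1 ≤ p - u + 1 by omega) u
  rw [show m - u + 1 + u = m + 1 by omega, show p - u + 1 + u = p + 1 by omega] at this
  omega

theorem macaulay_one_add_le (x y : ℕ) : macaulay 1 x + macaulay 1 y ≤ macaulay 1 (x + y) := by
  simp only [macaulay_one_left]
  have := choose_two_add_le (show 1 ≤ x + 1 by omega) y
  rw [add_comm 1 y, show x + 1 + y = x + y + 1 by omega] at this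
  simpa [add_comm] using this

theorem choose_succ_le_macaulay_choose {d : ℕ} (hd : d ≠ 0)
    (hS : ∀ x y, macaulay d x + macaulay d y ≤ macaulay d (x + y)) (p : ℕ) :
    (p + 1).choose (d + 2) ≤ macaulay d (p.choose (d + 1)) := by
  induction p with
  | zero => simp [choose_eq_zero_of_lt]
  | succ p ih =>
    calc (p + 2).choose (d + 2) = (p + 1).choose (d + 1) + (p + 1).choose (d + 2) :=
          choose_succ_succ' _ _
      _ ≤ macaulay d (p.choose d) + macaulay d (p.choose (d + 1)) := by
          rw [macaulay_choose hd]; omega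
      _ ≤ macaulay d ((p + 1).choose (d + 1)) := by rw [choose_succ_succ']; exact hS _ _

theorem macaulay_succ_le {d : ℕ} (hd : d ≠ 0)
    (hS : ∀ x y, macaulay d x + macaulay d y ≤ macaulay d (x + y)) (x : ℕ) :
    macaulay (d + 1) x ≤ macaulay d x := by
  obtain ⟨k, h₁, h₂⟩ := exists_choose_le_lt_choose d x
  calc macaulay (d + 1) x = (k + 1).choose (d + 2) + macaulay d (x - k.choose (d + 1)) :=
        macaulay_succ_of_choose_le_of_lt h₁ h₂
    _ ≤ macaulay d (k.choose (d + 1)) + macaulay d (x - k.choose (d + 1)) :=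
        Nat.add_le_add_right (choose_succ_le_macaulay_choose hd hS k) _
    _ ≤ macaulay d x := (hS _ _).trans_eq (by rw [Nat.add_sub_cancel' h₁])

theorem macaulay_succ_choose_succ_sub {d m u : ℕ} (hd : d ≠ 0) (hu : u ≤ m.choose d) :
    macaulay d (m.choose d) + macaulay (d + 1) ((m + 1).choose (d + 1) - u) =
      macaulay (d + 1) ((m + 1).choose (d + 1)) + macaulay d (m.choose d - u) := by
  have hm : (m + 1 + 1).choose (d + 2) = (m + 1).choose (d + 1) + (m + 1).choose (d + 2) :=
    choose_succ_succ' _ _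
  rw [macaulay_choose hd, macaulay_succ_choose]
  rcases Nat.eq_zero_or_pos u with rfl | hu₀
  · rw [Nat.sub_zero, Nat.sub_zero, macaulay_succ_choose, macaulay_choose hd, add_comm]
  · rw [show (m + 1).choose (d + 1) - u = m.choose (d + 1) + (m.choose d - u) by
        rw [choose_succ_succ']; omega, macaulay_succ_choose_add (by omega)]
    omega

theorem sumLe_succ {d n : ℕ} (hd : d ≠ 0)
    (hS : ∀ x y, macaulay d x + macaulay d y ≤ macaulay d (x + y))
    (hKd : SumLe d n) (hK : SumLe (d + 1) n) (hM : DropLe (d + 1) n) : SumLe (d + 1) (n + 1) := by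
  intro a b c ha hb habc
  wlog hba : b ≤ a generalizing a b
  · have := this b a hb ha (by omega) (by omega)
    omega
  have hN : (n + 1).choose (d + 1) = n.choose (d + 1) + n.choose d := by
    rw [choose_succ_succ', add_comm]
  have hf : ∀ α ≤ n.choose d, macaulay (d + 1) (n.choose (d + 1) + α) =
      macaulay (d + 1) (n.choose (d + 1)) + macaulay d α :=
    fun α hα => macaulay_succ_choose_add_of_le hd hα
  have hM' : ∀ u ≤ n.choose d, u ≤ n.choose (d + 1) →
      macaulay (d + 1) (n.choose (d + 1)) + macaulay d (n.choose d - u) ≤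
        macaulay d (n.choose d) + macaulay (d + 1) (n.choose (d + 1) - u) :=
    fun u hA hB => hM d n u hd (by omega) (by omega) hB hA
  rw [hN] at ha hb habc ⊢
  rw [hf _ le_rfl]
  unfold SumLe at hK hKd
  generalize n.choose d = A at *
  generalize n.choose (d + 1) = B at *
  rcases le_or_gt B b with hBb | hbB
  · obtain ⟨α, rfl⟩ : ∃ α, a = B + α := ⟨a - B, by omega⟩
    obtain ⟨β, rfl⟩ : ∃ β, b = B + β := ⟨b - B, by omega⟩
    rw [hf α (by omega), hf β (by omega)]
    rcases le_or_gt A (α + β) with hA | hA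
    · obtain ⟨γ, rfl⟩ : ∃ γ, c = B + γ := ⟨c - B, by omega⟩
      rw [hf γ (by omega)]
      have := hKd α β γ (by omega) (by omega) (by omega)
      omega
    · have := hM' (A - (α + β)) (by omega) (by omega)
      rw [show A - (A - (α + β)) = α + β by omega,
        show B - (A - (α + β)) = c by omega] at this
      have := hS α β
      omega
  rcases le_or_gt B a with hBa | haB
  · obtain ⟨α, rfl⟩ : ∃ α, a = B + α := ⟨a - B, by omega⟩
    rw [hf α (by omega)]
    have h₁ := hM' (A - α) (by omega) (by omega)
    rw [Nat.sub_sub_self (by omega)] at h₁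
    have h₂ := hK (B - (A - α)) b c (by omega) hbB.le (by omega)
    omega
  · have h₁ := hK a b (A + c) haB.le hbB.le (by omega)
    have h₂ := hK (B - A) (A + c) c (by omega) (by omega) (by omega)
    have h₃ := hM' A le_rfl (by omega)
    rw [Nat.sub_self, macaulay_zero_right] at h₃
    omega

theorem dropLe_succ_of_le_choose {d n e p u : ℕ} (hd : d ≠ 0) (hM : ∀ m, DropLe d m)
    (he : e ≠ 0) (hed : e ≤ d + 1) (hnp : n + 1 + e ≤ p + (d + 1))
    (hne : ¬(e = d + 1 ∧ p = n + 1)) (hu : u ≤ n.choose d) (hup : u ≤ p.choose e) :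
    macaulay (d + 1) ((n + 1).choose (d + 1)) + macaulay e (p.choose e - u) ≤
      macaulay e (p.choose e) + macaulay (d + 1) ((n + 1).choose (d + 1) - u) := by
  have hn := macaulay_succ_choose_succ_sub hd hu
  rcases hed.lt_or_eq with hed | rfl
  · have := hM n e p u he (by omega) (by omega) hu hup
    omega
  · obtain ⟨p, rfl⟩ : ∃ p₀, p = p₀ + 1 := ⟨p - 1, by omega⟩
    have hu' : u ≤ p.choose d := hu.trans (choose_le_choose d (by omega))
    have hp := macaulay_succ_choose_succ_sub hd hu'
    have := hM n d p u hd le_rfl (by omega) hu hu'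
    omega

theorem dropLe_succ {d n : ℕ} (hd : d ≠ 0) (hM : ∀ m, DropLe d m) (hK : SumLe (d + 1) n) :
    DropLe (d + 1) n := by
  intro e p
  induction p using Nat.strong_induction_on generalizing e with
  | _ p ihp =>
  intro u
  induction u using Nat.strong_induction_on with
  | _ u ihu =>
  intro he hed hnp hun hup
  rcases Nat.eq_zero_or_pos u with rfl | hu₀
  · rw [Nat.sub_zero, Nat.sub_zero, add_comm]
  by_cases hne : e = d + 1 ∧ p = n
  · obtain ⟨rfl, rfl⟩ := hne
    exact le_rfl
  obtain ⟨n, rfl⟩ : ∃ n₀, n = n₀ + 1 :=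
    exists_eq_add_one_of_ne_zero (by rintro rfl; rw [choose_zero_succ] at hun; omega)
  obtain ⟨p, rfl⟩ : ∃ p₀, p = p₀ + 1 := exists_eq_add_one_of_ne_zero (by
    rintro rfl; rw [choose_eq_zero_of_lt (by omega)] at hup; omega)
  rcases le_or_gt u (n.choose d) with huA | huA
  · exact dropLe_succ_of_le_choose hd hM he hed hnp hne huA hup
  obtain ⟨e, rfl⟩ := exists_eq_add_one_of_ne_zero he
  have hdn : d ≤ n := by
    by_contra h
    rw [choose_eq_zero_of_lt (by omega : n + 1 < d + 1)] at hun
    omega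
  have hpe : (p + 1).choose (e + 1) = p.choose e + p.choose (e + 1) := choose_succ_succ' _ _
  rcases le_or_gt u (p.choose e) with huB | huB
  · have he₀ : e ≠ 0 := by
      rintro rfl
      have := choose_pos hdn
      rw [choose_zero_right] at huB
      omega
    have hp := macaulay_succ_choose_succ_sub he₀ huB
    have := ihp p p.lt_succ_self e u he₀ (by omega) (by omega) hun huB
    omega
  · have hlt : n + 1 + (e + 1) < p + 1 + (d + 1) := by
      rcases (show e ≤ d by omega).lt_or_eq with hed' | rfl
      · have := lt_add_of_choose_lt hed' (huA.trans_le hup)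
        omega
      · omega
    have h₁ := ihp p p.lt_succ_self (e + 1) (u - p.choose e) he hed (by omega) (by omega)
      (by omega)
    rw [show p.choose (e + 1) - (u - p.choose e) = (p + 1).choose (e + 1) - u by omega] at h₁
    have h₂ := ihu (p.choose e) huB he hed hnp (by omega) (by omega)
    rw [show (p + 1).choose (e + 1) - p.choose e = p.choose (e + 1) by omega] at h₂
    have h₃ := hK ((n + 1).choose (d + 1) - p.choose e)
      ((n + 1).choose (d + 1) - (u - p.choose e)) ((n + 1).choose (d + 1) - u)
      (by omega) (by omega) (by omega)
    omega

theorem sumLe_zero (d : ℕ) : SumLe d 0 := by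
  intro a b c ha hb habc
  rcases d with _ | d
  · simp only [macaulay_zero_left, le_refl]
  · rw [choose_zero_succ] at ha hb habc
    obtain ⟨rfl, rfl, rfl⟩ : a = 0 ∧ b = 0 ∧ c = 0 := by omega
    exact Nat.le_add_left _ _

theorem macaulay_succ_add_le {d : ℕ} (hd : d ≠ 0)
    (hS : ∀ x y, macaulay d x + macaulay d y ≤ macaulay d (x + y))
    (hK : ∀ n, SumLe (d + 1) n) (x y : ℕ) :
    macaulay (d + 1) x + macaulay (d + 1) y ≤ macaulay (d + 1) (x + y) := by
  wlog hxy : x ≤ y generalizing x y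
  · rw [add_comm x, add_comm (macaulay _ x)]
    exact this y x (by omega)
  obtain ⟨k, h₁, h₂⟩ := exists_choose_le_lt_choose d (x + y)
  rw [macaulay_succ_of_choose_le_of_lt h₁ h₂]
  rcases le_or_gt (k.choose (d + 1)) y with hy | hy
  · rw [macaulay_succ_of_choose_le_of_lt hy (by omega),
      show x + y - k.choose (d + 1) = x + (y - k.choose (d + 1)) by omega]
    have := hS x (y - k.choose (d + 1))
    have := macaulay_succ_le hd hS x
    omega
  · have := hK k x y (x + y - k.choose (d + 1)) (by omega) hy.le (by omega)
    rw [macaulay_succ_choose] at this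
    have := macaulay_succ_le hd hS (x + y - k.choose (d + 1))
    omega

theorem sumLe_dropLe_add_le (d : ℕ) :
    (∀ n, SumLe (d + 1) n) ∧ (∀ m, DropLe (d + 1) m) ∧
      ∀ x y, macaulay (d + 1) x + macaulay (d + 1) y ≤ macaulay (d + 1) (x + y) := by
  induction d with
  | zero => exact ⟨sumLe_one, dropLe_one, macaulay_one_add_le⟩
  | succ d ih =>
    obtain ⟨hKd, hM, hS⟩ := ih
    have hd : d + 1 ≠ 0 := d.succ_ne_zero
    have hK : ∀ n, SumLe (d + 2) n := by
      intro n
      induction n with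
      | zero => exact sumLe_zero _
      | succ n ihn => exact sumLe_succ hd hS (hKd n) ihn (dropLe_succ hd hM ihn)
    exact ⟨hK, fun m => dropLe_succ hd hM (hK m), macaulay_succ_add_le hd hS hK⟩

theorem sumLe (d n : ℕ) : SumLe d n := by
  rcases d with _ | d
  · intro a b c _ _ _
    simp only [macaulay_zero_left, le_refl]
  · exact (sumLe_dropLe_add_le d).1 n

end Macaulay

theorem macaulay_add_le (d x y : ℕ) : macaulay d x + macaulay d y ≤ macaulay d (x + y) := by
  rcases d with _ | d
  · simp only [macaulay_zero_left, le_refl]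
  · exact (Macaulay.sumLe_dropLe_add_le d).2.2 x y

theorem macaulay_mono (d : ℕ) : Monotone (macaulay d) := fun x y h => by
  obtain ⟨t, rfl⟩ := Nat.exists_eq_add_of_le h
  exact (Nat.le_add_right _ _).trans (macaulay_add_le d x t)

theorem macaulay_sum_le_general (m d a b c : ℕ)
    (hab : max a b ≤ Nat.choose (m - 1 + d) d)
    (hsum : a + b ≤ Nat.choose (m - 1 + d) d + c) :
    macaulay d a + macaulay d b ≤ macaulay d (Nat.choose (m - 1 + d) d) + macaulay d c := by
  rcases le_or_gt (a + b) (Nat.choose (m - 1 + d) d) with h | h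
  · calc macaulay d a + macaulay d b ≤ macaulay d (a + b) := macaulay_add_le d a b
      _ ≤ macaulay d (Nat.choose (m - 1 + d) d) := macaulay_mono d h
      _ ≤ _ := Nat.le_add_right _ _
  · calc macaulay d a + macaulay d b
        ≤ macaulay d (Nat.choose (m - 1 + d) d) + macaulay d (a + b - Nat.choose (m - 1 + d) d) :=
          Macaulay.sumLe d _ a b _ (le_of_max_le_left hab) (le_of_max_le_right hab) (by omega)
      _ ≤ _ := Nat.add_le_add_left (macaulay_mono d (by omega)) _

/-- Let `m`, `d` be positive integers and `a`, `b` nonnegative integers with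
`max a b ≤ C(m - 1 + d, d)`. If `c` is a positive integer with
`a + b ≤ C(m - 1 + d, d) + c`, then
`a^{⟨d⟩} + b^{⟨d⟩} ≤ (C(m - 1 + d, d))^{⟨d⟩} + c^{⟨d⟩}`. -/
theorem macaulay_sum_le (m d a b c : ℕ) (hm : 0 < m) (hd : 0 < d) (hc : 0 < c)
    (hab : max a b ≤ Nat.choose (m - 1 + d) d)
    (hsum : a + b ≤ Nat.choose (m - 1 + d) d + c) :
    macaulay d a + macaulay d b ≤ macaulay d (Nat.choose (m - 1 + d) d) + macaulay d c :=
  macaulay_sum_le_general m d a b c hab hsum
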